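/- arXiv:2010.06162 — 2 statements merged into one kernel-verified Lean document; each statement's English description precedes it below -/
import Mathlib

section
/- For every n ≥ 2, the pseudo braid monoid PM_n embeds in a group: there exist a group G and an injective monoid homomorphism from PM_n to G. -/
/-!
The pseudo braid monoid `PM n` (n ≥ 2), presented by generators
σ_1,…,σ_{n−1}, σ_1⁻¹,…,σ_{n−1}⁻¹, p_1,…,p_{n−1} subject to:
σ_i σ_i⁻¹ = σ_i⁻¹ σ_i = 1; σ_i σ_{i+1} σ_i = σ_{i+1} σ_i σ_{i+1};
σ_i σ_j = σ_j σ_i for |i−j| ≥ 2; p_i p_j = p_j p_i for |i−j| ≥ 2;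
p_i σ_j^{±1} = σ_j^{±1} p_i for |i−j| ≥ 2; p_i σ_i^{±1} = σ_i^{±1} p_i;
σ_i σ_{i+1} p_i = p_{i+1} σ_i σ_{i+1}; σ_{i+1} σ_i p_{i+1} = p_i σ_{i+1} σ_i.
-/

/-- Generators of the pseudo braid monoid: σ_i, σ_i⁻¹ and p_i for 1 ≤ i ≤ n−1. -/
inductive PMGen (n : ℕ) : Type
  | sig (i : ℕ) (h : 1 ≤ i ∧ i ≤ n - 1) : PMGen n
  | sigInv (i : ℕ) (h : 1 ≤ i ∧ i ≤ n - 1) : PMGen n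
  | p (i : ℕ) (h : 1 ≤ i ∧ i ≤ n - 1) : PMGen n

/-- The word σ_i in the free monoid on the generators. -/
def pmS (n i : ℕ) : FreeMonoid (PMGen n) :=
  if h : 1 ≤ i ∧ i ≤ n - 1 then FreeMonoid.of (PMGen.sig i h) else 1

/-- The word σ_i⁻¹ in the free monoid on the generators. -/
def pmSI (n i : ℕ) : FreeMonoid (PMGen n) :=
  if h : 1 ≤ i ∧ i ≤ n - 1 then FreeMonoid.of (PMGen.sigInv i h) else 1

/-- The word p_i in the free monoid on the generators. -/
def pmP (n i : ℕ) : FreeMonoid (PMGen n) :=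
  if h : 1 ≤ i ∧ i ≤ n - 1 then FreeMonoid.of (PMGen.p i h) else 1

/-- The defining relations of the pseudo braid monoid `PM n`. -/
inductive PMRel (n : ℕ) : FreeMonoid (PMGen n) → FreeMonoid (PMGen n) → Prop
  | inv_right (i : ℕ) (h : 1 ≤ i ∧ i ≤ n - 1) :
      PMRel n (pmS n i * pmSI n i) 1
  | inv_left (i : ℕ) (h : 1 ≤ i ∧ i ≤ n - 1) :
      PMRel n (pmSI n i * pmS n i) 1
  | braid (i : ℕ) (h : 1 ≤ i ∧ i + 1 ≤ n - 1) :
      PMRel n (pmS n i * pmS n (i+1) * pmS n i) (pmS n (i+1) * pmS n i * pmS n (i+1))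
  | sig_comm (i j : ℕ) (hi : 1 ≤ i ∧ i ≤ n - 1) (hj : 1 ≤ j ∧ j ≤ n - 1)
      (hij : i + 2 ≤ j ∨ j + 2 ≤ i) :
      PMRel n (pmS n i * pmS n j) (pmS n j * pmS n i)
  | p_comm (i j : ℕ) (hi : 1 ≤ i ∧ i ≤ n - 1) (hj : 1 ≤ j ∧ j ≤ n - 1)
      (hij : i + 2 ≤ j ∨ j + 2 ≤ i) :
      PMRel n (pmP n i * pmP n j) (pmP n j * pmP n i)
  | p_sig_far_pos (i j : ℕ) (hi : 1 ≤ i ∧ i ≤ n - 1) (hj : 1 ≤ j ∧ j ≤ n - 1)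
      (hij : i + 2 ≤ j ∨ j + 2 ≤ i) :
      PMRel n (pmP n i * pmS n j) (pmS n j * pmP n i)
  | p_sig_far_neg (i j : ℕ) (hi : 1 ≤ i ∧ i ≤ n - 1) (hj : 1 ≤ j ∧ j ≤ n - 1)
      (hij : i + 2 ≤ j ∨ j + 2 ≤ i) :
      PMRel n (pmP n i * pmSI n j) (pmSI n j * pmP n i)
  | p_sig_pos (i : ℕ) (h : 1 ≤ i ∧ i ≤ n - 1) :
      PMRel n (pmP n i * pmS n i) (pmS n i * pmP n i)
  | p_sig_neg (i : ℕ) (h : 1 ≤ i ∧ i ≤ n - 1) :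
      PMRel n (pmP n i * pmSI n i) (pmSI n i * pmP n i)
  | ssp (i : ℕ) (h : 1 ≤ i ∧ i + 1 ≤ n - 1) :
      PMRel n (pmS n i * pmS n (i+1) * pmP n i) (pmP n (i+1) * pmS n i * pmS n (i+1))
  | ssp' (i : ℕ) (h : 1 ≤ i ∧ i + 1 ≤ n - 1) :
      PMRel n (pmS n (i+1) * pmS n i * pmP n (i+1)) (pmP n i * pmS n (i+1) * pmS n i)

/-- The pseudo braid monoid `PM n`. -/
def PM (n : ℕ) := (conGen (PMRel n)).Quotient

instance (n : ℕ) : Monoid (PM n) :=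
  inferInstanceAs (Monoid ((conGen (PMRel n)).Quotient))

/-- The generator σ_i of `PM n` (defined for 1 ≤ i ≤ n−1; junk value 1 otherwise). -/
def PM.s (n i : ℕ) : PM n := (conGen (PMRel n)).mk' (pmS n i)

/-- The generator σ_i⁻¹ of `PM n` (defined for 1 ≤ i ≤ n−1; junk value 1 otherwise). -/
def PM.sInv (n i : ℕ) : PM n := (conGen (PMRel n)).mk' (pmSI n i)

/-- The generator p_i of `PM n` (defined for 1 ≤ i ≤ n−1; junk value 1 otherwise). -/
def PM.p (n i : ℕ) : PM n := (conGen (PMRel n)).mk' (pmP n i)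

/-!
Every element of `PM n` has the form `t * g` with `g` a unit (a braid) and `t` a product of
conjugates of the `p_i`. Record `t` in the trace monoid over the alphabet `PM n`, two letters
being independent when they commute. A trace monoid embeds in a group: the projections of a
trace onto all pairs of dependent letters are free words, and they determine the trace. The
units act compatibly by conjugation on the trace monoid and on this group, so `σ_i ↦ σ_i`,
`p_i ↦ p_i` defines a homomorphism from `PM n` to a semidirect product whose value at
`t * g` is the pair `(t, g)`; the evaluation `(t, g) ↦ t * g` then inverts it on its image.
-/

theorem FreeMonoid.lift_freeGroupOf_injective {α : Type*} :
    Function.Injective (FreeMonoid.lift (FreeGroup.of : α → FreeGroup α)) := by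
  classical
  have hword : ∀ x : FreeMonoid α,
      (FreeMonoid.lift FreeGroup.of x).toWord = x.toList.map (·, true) := by
    intro x
    have hmk : FreeMonoid.lift FreeGroup.of x = FreeGroup.mk (x.toList.map (·, true)) := by
      induction x using FreeMonoid.inductionOn' with
      | one => rfl
      | of_mul a x ih => rw [map_mul, FreeMonoid.lift_eval_of, ih]; rfl
    rw [hmk, FreeGroup.toWord_mk, FreeGroup.IsReduced.reduce_eq]
    simpa [FreeGroup.IsReduced, List.isChain_map] using
      (List.pairwise_of_forall fun _ _ => trivial).isChain
  intro x y h
  have := congrArg FreeGroup.toWord h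
  rw [hword, hword] at this
  exact FreeMonoid.toList.injective
    (List.map_injective_iff.2 (fun a b h => congrArg Prod.fst h) this)

section

variable {α β M : Type*} [Monoid M] (I : α → α → Prop)

def traceCon : Con (FreeMonoid α) :=
  conGen fun x y => ∃ a b, I a b ∧ x = .of a * .of b ∧ y = .of b * .of a

abbrev TraceMonoid := (traceCon I).Quotient

namespace TraceMonoid

def of (a : α) : TraceMonoid I := (traceCon I).mk' (.of a)

variable {I}

theorem of_mul_of_comm {a b : α} (h : I a b) : of I a * of I b = of I b * of I a :=
  (Con.eq _).2 (.of _ _ ⟨a, b, h, rfl, rfl⟩)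

theorem induction_on {C : TraceMonoid I → Prop} (x : TraceMonoid I) (one : C 1)
    (of_mul : ∀ a x, C x → C (of I a * x)) : C x := by
  induction x using Con.induction_on with
  | H w =>
    induction w using FreeMonoid.inductionOn' with
    | one => exact one
    | of_mul a w ih => exact of_mul a _ ih

theorem hom_ext {f g : TraceMonoid I →* M} (h : ∀ a, f (of I a) = g (of I a)) : f = g := by
  refine MonoidHom.ext fun x => ?_
  induction x using induction_on with
  | one => simp only [map_one]
  | of_mul a x ih => rw [map_mul, map_mul, h, ih]

def lift (f : α → M) (hf : ∀ a b, I a b → Commute (f a) (f b)) : TraceMonoid I →* M :=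
  Con.lift _ (FreeMonoid.lift f) <| Con.conGen_le.2 <| by
    rintro _ _ ⟨a, b, hab, rfl, rfl⟩
    simpa using (hf a b hab).eq

@[simp]
theorem lift_of (f : α → M) (hf : ∀ a b, I a b → Commute (f a) (f b)) (a : α) :
    lift f hf (of I a) = f a :=
  FreeMonoid.lift_eval_of f a

def map {J : β → β → Prop} (f : α → β) (hf : ∀ a b, I a b → J (f a) (f b)) :
    TraceMonoid I →* TraceMonoid J :=
  lift (of J ∘ f) fun a b h => of_mul_of_comm (hf a b h)

@[simp]
theorem map_of {J : β → β → Prop} (f : α → β) (hf : ∀ a b, I a b → J (f a) (f b)) (a : α) :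
    map f hf (of I a) = of J (f a) :=
  lift_of _ _ a

variable (I)

def Dependent (u v : α) : Prop := u = v ∨ ¬(I u v ∨ I v u)

/- At a dependent pair `(u, v)`, the letters `u` and `v` are written as `false` and `true`;
at an independent pair every letter is erased, so that independent letters commute. -/
open Classical in
noncomputable def projLetter (a : α) (d : α × α) : FreeMonoid Bool :=
  if Dependent I d.1 d.2 then
    if a = d.1 then .of false else if a = d.2 then .of true else 1
  else 1

theorem projLetter_commute {a b : α} (h : I a b) :
    Commute (projLetter I a) (projLetter I b) := by
  funext ⟨u, v⟩
  simp only [Pi.mul_apply, projLetter]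
  by_cases hd : Dependent I u v
  · by_cases hab : a = b
    · rw [hab]
    have hu : ¬(a = u ∧ b = v) := fun ⟨rfl, rfl⟩ => hd.elim hab fun hn => hn (.inl h)
    have hv : ¬(a = v ∧ b = u) := fun ⟨rfl, rfl⟩ => hd.elim (Ne.symm hab) fun hn => hn (.inr h)
    split_ifs <;> simp_all
  · simp [hd]

noncomputable def proj : TraceMonoid I →* (α × α → FreeMonoid Bool) :=
  lift (projLetter I) fun _ _ => projLetter_commute I

variable {I}

theorem proj_of_apply_fst {s t : α} (hd : Dependent I s t) :
    proj I (of I s) (s, t) = .of false := by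
  simp [proj, projLetter, hd]

theorem proj_of_apply_snd {s a : α} (hd : Dependent I s a) (ha : a ≠ s) :
    proj I (of I a) (s, a) = .of true := by
  simp [proj, projLetter, hd, ha]

theorem proj_of_apply_of_ne {a u v : α} (hu : a ≠ u) (hv : a ≠ v) :
    proj I (of I a) (u, v) = 1 := by
  simp [proj, projLetter, hu, hv]

theorem exists_eq_of_mul_of_proj {s : α} {y : TraceMonoid I}
    (h : ∀ t, Dependent I s t → ∃ c, proj I y (s, t) = .of false * c) :
    ∃ y₀, y = of I s * y₀ := by
  induction y using induction_on with
  | one =>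
    obtain ⟨c, hc⟩ := h s (.inl rfl)
    simpa using congrArg FreeMonoid.toList hc
  | of_mul a y ih =>
    by_cases has : a = s
    · exact ⟨y, by rw [has]⟩
    have hind : I s a ∨ I a s := by
      by_contra hn
      obtain ⟨c, hc⟩ := h a (.inr hn)
      rw [map_mul, Pi.mul_apply, proj_of_apply_snd (.inr hn) has] at hc
      simpa using congrArg FreeMonoid.toList hc
    obtain ⟨y₀, rfl⟩ := ih fun t ht => by
      have hat : a ≠ t := by
        rintro rfl
        exact ht.elim (has ∘ Eq.symm) (· hind)
      simpa [proj_of_apply_of_ne has hat] using h t ht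
    refine ⟨of I a * y₀, ?_⟩
    rw [← mul_assoc, ← mul_assoc, hind.elim (fun h => (of_mul_of_comm h).symm) of_mul_of_comm]

theorem proj_injective : Function.Injective (proj I) := by
  intro x y h
  induction x using induction_on generalizing y with
  | one =>
    induction y using induction_on with
    | one => rfl
    | of_mul a y _ =>
      have := congrFun h (a, a)
      rw [map_mul, Pi.mul_apply, proj_of_apply_fst (.inl rfl)] at this
      simpa using congrArg FreeMonoid.toList this
  | of_mul s x ih =>
    obtain ⟨y₀, rfl⟩ := exists_eq_of_mul_of_proj fun t ht =>
      ⟨proj I x (s, t), by rw [← h, map_mul, Pi.mul_apply, proj_of_apply_fst ht]⟩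
    rw [map_mul, map_mul] at h
    rw [ih (mul_left_cancel h)]

variable (I) in
noncomputable def toFreeGroups : TraceMonoid I →* (α × α → FreeGroup Bool) :=
  ((FreeMonoid.lift FreeGroup.of).compLeft _).comp (proj I)

theorem toFreeGroups_injective : Function.Injective (toFreeGroups I) :=
  FreeMonoid.lift_freeGroupOf_injective.comp_left.comp proj_injective

theorem dependent_apply_iff (e : Equiv.Perm α) (he : ∀ a b, I (e a) (e b) ↔ I a b) (u v : α) :
    Dependent I (e u) (e v) ↔ Dependent I u v := by
  simp only [Dependent, he, e.apply_eq_iff_eq]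

theorem toFreeGroups_of_apply (e : Equiv.Perm α) (he : ∀ a b, I (e a) (e b) ↔ I a b) (a : α)
    (d : α × α) :
    toFreeGroups I (of I (e a)) d = toFreeGroups I (of I a) (e.symm d.1, e.symm d.2) := by
  have hd := dependent_apply_iff e he (e.symm d.1) (e.symm d.2)
  simp only [Equiv.apply_symm_apply] at hd
  simp only [toFreeGroups, proj, projLetter, MonoidHom.comp_apply, lift_of,
    MonoidHom.compLeft_apply, Function.comp_apply]
  split_ifs <;> simp_all [e.eq_symm_apply]

end TraceMonoid

end

theorem ConjAct.commute_units_smul_iff {M : Type*} [Monoid M] (g : ConjAct Mˣ) (x y : M) :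
    Commute (g • x) (g • y) ↔ Commute x y :=
  ⟨fun h => by simpa using h.map (MulDistribMulAction.toMonoidHom M g⁻¹),
    fun h => h.map (MulDistribMulAction.toMonoidHom M g)⟩

section Conjugation

open SemidirectProduct ConjAct

variable {M : Type*} [Monoid M]

namespace TraceMonoid

noncomputable def eval : TraceMonoid (@Commute M _) →* M :=
  lift id fun _ _ h => h

def conj (g : ConjAct Mˣ) : TraceMonoid (@Commute M _) →* TraceMonoid (@Commute M _) :=
  map (fun x : M => g • x) fun x y h => (commute_units_smul_iff g x y).2 h

@[simp]
theorem conj_of (g : ConjAct Mˣ) (x : M) : conj g (of Commute x) = of Commute (g • x) :=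
  map_of _ _ x

theorem eval_conj (g : ConjAct Mˣ) (t : TraceMonoid (@Commute M _)) :
    eval (conj g t) = g • eval t := by
  have : eval.comp (conj g) = (MulDistribMulAction.toMonoidHom M g).comp eval :=
    hom_ext fun x => by simp [eval]
  exact DFunLike.congr_fun this t

theorem toFreeGroups_conj (g : ConjAct Mˣ) (t : TraceMonoid (@Commute M _)) :
    toFreeGroups Commute (conj g t) = mulAutArrow g (toFreeGroups Commute t) := by
  have : (toFreeGroups Commute).comp (conj g) =
      (mulAutArrow g).toMonoidHom.comp (toFreeGroups Commute) :=
    hom_ext fun x => funext fun d => by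
      simp only [MonoidHom.comp_apply, conj_of, MulEquiv.coe_toMonoidHom,
        mulAutArrow_apply_apply]
      exact toFreeGroups_of_apply (MulAction.toPerm g) (commute_units_smul_iff g) x d
  exact DFunLike.congr_fun this t

/- Together with `TraceGroup.inl_mul_inr_mul_inl_mul_inr`: both `(t, g) ↦ eval t * g` and
`(t, g) ↦ inl t * inr g` respect the product `(t, g) * (t', g') = (t * conj g t', g * g')`. -/
theorem eval_mul_mul_eval_mul (t t' : TraceMonoid (@Commute M _)) (g g' : ConjAct Mˣ) :
    eval t * ofConjAct g * (eval t' * ofConjAct g') =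
      eval (t * conj g t') * ofConjAct (g * g') := by
  rw [map_mul, eval_conj, units_smul_def]
  simp only [map_mul, Units.val_mul, mul_assoc, Units.inv_mul_cancel_left]

end TraceMonoid

open TraceMonoid

variable (M) in
noncomputable abbrev TraceGroup : Type _ :=
  (M × M → FreeGroup Bool) ⋊[mulAutArrow] ConjAct Mˣ

namespace TraceGroup

noncomputable def letter (x : M) : TraceGroup M :=
  inl (toFreeGroups Commute (of Commute x))

theorem commute_letter {x y : M} (h : Commute x y) : Commute (letter x) (letter y) := by
  simp only [Commute, SemiconjBy, letter, ← map_mul, of_mul_of_comm h]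

theorem inr_mul_letter {u : Mˣ} {x y : M} (h : SemiconjBy (u : M) x y) :
    inr (toConjAct u) * letter x = letter y * inr (toConjAct u) := by
  have hy : toConjAct u • x = y := by
    rw [units_smul_def, ofConjAct_toConjAct, h.eq, Units.mul_inv_cancel_right]
  rw [letter, ← hy, letter, ← conj_of, toFreeGroups_conj, inl_aut, map_inv,
    inv_mul_cancel_right]

theorem inl_mul_inr_mul_inl_mul_inr (t t' : TraceMonoid (@Commute M _)) (g g' : ConjAct Mˣ) :
    inl (toFreeGroups Commute t) * inr g * (inl (toFreeGroups Commute t') * inr g') =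
      (inl (toFreeGroups Commute (t * conj g t')) * inr (g * g') : TraceGroup M) := by
  rw [map_mul, toFreeGroups_conj, map_mul, map_mul, inl_aut, map_inv]
  group

theorem injective_of_closure_eq_top (F : M →* TraceGroup M) {T : Set M}
    (hT : Submonoid.closure T = ⊤)
    (hF : ∀ x ∈ T, (∃ u : Mˣ, (u : M) = x ∧ F x = inr (toConjAct u)) ∨ F x = letter x) :
    Function.Injective F := by
  have exists_repr : ∀ x, ∃ (t : TraceMonoid (@Commute M _)) (g : ConjAct Mˣ),
      F x = inl (toFreeGroups Commute t) * inr g ∧ x = eval t * ofConjAct g := by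
    intro x
    induction (hT ▸ Submonoid.mem_top x : x ∈ Submonoid.closure T) using
      Submonoid.closure_induction with
    | mem x hx =>
      rcases hF x hx with ⟨u, rfl, hu⟩ | hx
      · exact ⟨1, toConjAct u, by simp [hu], by simp⟩
      · exact ⟨of Commute x, 1, by simp [hx, letter], by simp [eval]⟩
    | one => exact ⟨1, 1, by simp, by simp⟩
    | mul x y _ _ hx hy =>
      obtain ⟨t, g, hFx, rfl⟩ := hx
      obtain ⟨t', g', hFy, rfl⟩ := hy
      exact ⟨t * conj g t', g * g', by rw [map_mul, hFx, hFy, inl_mul_inr_mul_inl_mul_inr],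
        eval_mul_mul_eval_mul t t' g g'⟩
  intro x y h
  obtain ⟨t, g, hFx, rfl⟩ := exists_repr x
  obtain ⟨t', g', hFy, rfl⟩ := exists_repr y
  rw [hFx, hFy] at h
  have ht := congrArg SemidirectProduct.left h
  have hg := congrArg SemidirectProduct.right h
  simp only [mul_left, left_inl, right_inl, map_one, left_inr, mul_one,
    mul_right, right_inr, one_mul] at ht hg
  rw [toFreeGroups_injective ht, hg]

end TraceGroup

end Conjugation

namespace PM

open SemidirectProduct ConjAct TraceGroup

variable {n : ℕ}

def mk (n : ℕ) : FreeMonoid (PMGen n) →* PM n := (conGen (PMRel n)).mk'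

@[simp] theorem mk_pmS (i : ℕ) : mk n (pmS n i) = PM.s n i := rfl
@[simp] theorem mk_pmSI (i : ℕ) : mk n (pmSI n i) = PM.sInv n i := rfl
@[simp] theorem mk_pmP (i : ℕ) : mk n (pmP n i) = PM.p n i := rfl

theorem mk_eq_of_rel {a b : FreeMonoid (PMGen n)} (h : PMRel n a b) : mk n a = mk n b :=
  (Con.eq _).2 (.of a b h)

theorem s_mul_sInv (n i : ℕ) : PM.s n i * PM.sInv n i = 1 := by
  by_cases h : 1 ≤ i ∧ i ≤ n - 1
  · simpa using mk_eq_of_rel (PMRel.inv_right i h)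
  · rw [← mk_pmS, ← mk_pmSI, pmS, pmSI, dif_neg h, dif_neg h, map_one, mul_one]

theorem sInv_mul_s (n i : ℕ) : PM.sInv n i * PM.s n i = 1 := by
  by_cases h : 1 ≤ i ∧ i ≤ n - 1
  · simpa using mk_eq_of_rel (PMRel.inv_left i h)
  · rw [← mk_pmS, ← mk_pmSI, pmS, pmSI, dif_neg h, dif_neg h, map_one, mul_one]

def sUnit (n i : ℕ) : (PM n)ˣ := ⟨PM.s n i, PM.sInv n i, s_mul_sInv n i, sInv_mul_s n i⟩

noncomputable def generatorImage : PMGen n → TraceGroup (PM n)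
  | .sig i _ => inr (toConjAct (sUnit n i))
  | .sigInv i _ => inr (toConjAct (sUnit n i)⁻¹)
  | .p i _ => letter (PM.p n i)

theorem lift_generatorImage_pmS {i : ℕ} (h : 1 ≤ i ∧ i ≤ n - 1) :
    FreeMonoid.lift generatorImage (pmS n i) = inr (toConjAct (sUnit n i)) := by
  rw [pmS, dif_pos h]; rfl

theorem lift_generatorImage_pmSI {i : ℕ} (h : 1 ≤ i ∧ i ≤ n - 1) :
    FreeMonoid.lift generatorImage (pmSI n i) = inr (toConjAct (sUnit n i)⁻¹) := by
  rw [pmSI, dif_pos h]; rfl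

theorem lift_generatorImage_pmP {i : ℕ} (h : 1 ≤ i ∧ i ≤ n - 1) :
    FreeMonoid.lift generatorImage (pmP n i) = letter (PM.p n i) := by
  rw [pmP, dif_pos h]; rfl

theorem lift_generatorImage_eq_of_rel {a b : FreeMonoid (PMGen n)} (hab : PMRel n a b) :
    FreeMonoid.lift generatorImage a = FreeMonoid.lift generatorImage b := by
  have hrel := mk_eq_of_rel hab
  cases hab <;> simp only [map_mul, mk_pmS, mk_pmSI, mk_pmP] at hrel <;>
    simp (disch := omega) only [map_mul, map_one, lift_generatorImage_pmS,
      lift_generatorImage_pmSI, lift_generatorImage_pmP]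
  case inv_right | inv_left => simp
  case braid | sig_comm =>
    simp only [← map_mul]
    congr 2
    ext
    simpa [sUnit] using hrel
  case p_comm => exact commute_letter hrel
  case p_sig_far_pos | p_sig_far_neg | p_sig_pos | p_sig_neg =>
    exact (inr_mul_letter (by exact hrel.symm)).symm
  case ssp | ssp' =>
    rw [← map_mul, ← map_mul, mul_assoc _ (inr _), ← map_mul, ← map_mul]
    exact inr_mul_letter (by simpa [sUnit, SemiconjBy, mul_assoc] using hrel)

noncomputable def toTraceGroup (n : ℕ) : PM n →* TraceGroup (PM n) :=
  Con.lift _ (FreeMonoid.lift generatorImage)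
    (Con.conGen_le.2 fun _ _ h => lift_generatorImage_eq_of_rel h)

theorem toTraceGroup_mk (w : FreeMonoid (PMGen n)) :
    toTraceGroup n (mk n w) = FreeMonoid.lift generatorImage w :=
  Con.lift_mk' _ _

theorem closure_range_mk_of : Submonoid.closure (Set.range fun g => mk n (.of g)) = ⊤ := by
  rw [Set.range_comp' (mk n) FreeMonoid.of, ← MonoidHom.map_mclosure,
    FreeMonoid.closure_range_of, ← MonoidHom.mrange_eq_map, MonoidHom.mrange_eq_top]
  exact Con.mk'_surjective

theorem toTraceGroup_injective (n : ℕ) : Function.Injective (toTraceGroup n) := by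
  refine injective_of_closure_eq_top _ closure_range_mk_of ?_
  rintro _ ⟨g, rfl⟩
  rw [toTraceGroup_mk, FreeMonoid.lift_eval_of]
  cases g with
  | sig i h => exact .inl ⟨sUnit n i, by simp [sUnit, ← mk_pmS, pmS, h], rfl⟩
  | sigInv i h => exact .inl ⟨(sUnit n i)⁻¹, by simp [sUnit, ← mk_pmSI, pmSI, h], rfl⟩
  | p i h => exact .inr (by simp [generatorImage, ← mk_pmP, pmP, h])

end PM

theorem pm_embeds_in_group_general (n : ℕ) :
    ∃ (G : Type) (_ : Group G) (f : PM n →* G), Function.Injective f :=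
  ⟨TraceGroup (PM n), inferInstance, PM.toTraceGroup n, PM.toTraceGroup_injective n⟩

/-- **The pseudo braid monoid embeds in a group**: for every n ≥ 2, there exist a group G
and an injective monoid homomorphism from `PM n` to G. -/
theorem pm_embeds_in_group (n : ℕ) (hn : 2 ≤ n) :
    ∃ (G : Type) (_ : Group G) (f : PM n →* G), Function.Injective f :=
  pm_embeds_in_group_general n
end

section
/- Transitivity relations for generalized ties: for every n ≥ 2 and all indices 1 ≤ i < k < m ≤ n, the following equalities hold in the tied braid monoid TM_n: η_{i,k} η_{k,m} = η_{i,k} η_{i,m} = η_{k,m} η_{i,m}. -/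
/-!
The tied braid monoid `TM n` (n ≥ 2), presented by generators
σ_1,…,σ_{n−1}, σ_1⁻¹,…,σ_{n−1}⁻¹, η_1,…,η_{n−1} subject to the relations:
σ_i σ_i⁻¹ = σ_i⁻¹ σ_i = 1; σ_i σ_{i+1} σ_i = σ_{i+1} σ_i σ_{i+1};
σ_i σ_j = σ_j σ_i for |i−j| ≥ 2; η_i η_j = η_j η_i for all i, j;
η_i σ_i = σ_i η_i; η_i σ_j = σ_j η_i for |i−j| ≥ 2;
η_i σ_j σ_i^ε = σ_j σ_i^ε η_j for |i−j| = 1, ε = ±1;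
η_i η_j σ_i = η_j σ_i η_j = σ_i η_i η_j for |i−j| = 1; η_i² = η_i.
-/

/-- Generators of the tied braid monoid: σ_i, σ_i⁻¹ and η_i for 1 ≤ i ≤ n−1. -/
inductive TMGen (n : ℕ) : Type
  | sig (i : ℕ) (h : 1 ≤ i ∧ i ≤ n - 1) : TMGen n
  | sigInv (i : ℕ) (h : 1 ≤ i ∧ i ≤ n - 1) : TMGen n
  | eta (i : ℕ) (h : 1 ≤ i ∧ i ≤ n - 1) : TMGen n

/-- The word σ_i in the free monoid on the generators. -/
def wS (n i : ℕ) : FreeMonoid (TMGen n) :=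
  if h : 1 ≤ i ∧ i ≤ n - 1 then FreeMonoid.of (TMGen.sig i h) else 1

/-- The word σ_i⁻¹ in the free monoid on the generators. -/
def wSI (n i : ℕ) : FreeMonoid (TMGen n) :=
  if h : 1 ≤ i ∧ i ≤ n - 1 then FreeMonoid.of (TMGen.sigInv i h) else 1

/-- The word η_i in the free monoid on the generators. -/
def wE (n i : ℕ) : FreeMonoid (TMGen n) :=
  if h : 1 ≤ i ∧ i ≤ n - 1 then FreeMonoid.of (TMGen.eta i h) else 1

/-- The defining relations of the tied braid monoid `TM n`. -/
inductive TMRel (n : ℕ) : FreeMonoid (TMGen n) → FreeMonoid (TMGen n) → Prop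
  | inv_right (i : ℕ) (h : 1 ≤ i ∧ i ≤ n - 1) :
      TMRel n (wS n i * wSI n i) 1
  | inv_left (i : ℕ) (h : 1 ≤ i ∧ i ≤ n - 1) :
      TMRel n (wSI n i * wS n i) 1
  | braid (i : ℕ) (h : 1 ≤ i ∧ i + 1 ≤ n - 1) :
      TMRel n (wS n i * wS n (i+1) * wS n i) (wS n (i+1) * wS n i * wS n (i+1))
  | sig_comm (i j : ℕ) (hi : 1 ≤ i ∧ i ≤ n - 1) (hj : 1 ≤ j ∧ j ≤ n - 1)
      (hij : i + 2 ≤ j ∨ j + 2 ≤ i) :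
      TMRel n (wS n i * wS n j) (wS n j * wS n i)
  | eta_comm (i j : ℕ) (hi : 1 ≤ i ∧ i ≤ n - 1) (hj : 1 ≤ j ∧ j ≤ n - 1) :
      TMRel n (wE n i * wE n j) (wE n j * wE n i)
  | eta_sig (i : ℕ) (h : 1 ≤ i ∧ i ≤ n - 1) :
      TMRel n (wE n i * wS n i) (wS n i * wE n i)
  | eta_sig_far (i j : ℕ) (hi : 1 ≤ i ∧ i ≤ n - 1) (hj : 1 ≤ j ∧ j ≤ n - 1)
      (hij : i + 2 ≤ j ∨ j + 2 ≤ i) :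
      TMRel n (wE n i * wS n j) (wS n j * wE n i)
  | eta_slide_pos (i j : ℕ) (hi : 1 ≤ i ∧ i ≤ n - 1) (hj : 1 ≤ j ∧ j ≤ n - 1)
      (hij : j = i + 1 ∨ i = j + 1) :
      TMRel n (wE n i * wS n j * wS n i) (wS n j * wS n i * wE n j)
  | eta_slide_neg (i j : ℕ) (hi : 1 ≤ i ∧ i ≤ n - 1) (hj : 1 ≤ j ∧ j ≤ n - 1)
      (hij : j = i + 1 ∨ i = j + 1) :
      TMRel n (wE n i * wS n j * wSI n i) (wS n j * wSI n i * wE n j)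
  | eta_eta_sig₁ (i j : ℕ) (hi : 1 ≤ i ∧ i ≤ n - 1) (hj : 1 ≤ j ∧ j ≤ n - 1)
      (hij : j = i + 1 ∨ i = j + 1) :
      TMRel n (wE n i * wE n j * wS n i) (wE n j * wS n i * wE n j)
  | eta_eta_sig₂ (i j : ℕ) (hi : 1 ≤ i ∧ i ≤ n - 1) (hj : 1 ≤ j ∧ j ≤ n - 1)
      (hij : j = i + 1 ∨ i = j + 1) :
      TMRel n (wE n j * wS n i * wE n j) (wS n i * wE n i * wE n j)
  | eta_idem (i : ℕ) (h : 1 ≤ i ∧ i ≤ n - 1) :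
      TMRel n (wE n i * wE n i) (wE n i)

/-- The tied braid monoid `TM n`: the quotient of the free monoid on the
generators by the congruence generated by the defining relations. -/
def TM (n : ℕ) := (conGen (TMRel n)).Quotient

instance (n : ℕ) : Monoid (TM n) :=
  inferInstanceAs (Monoid ((conGen (TMRel n)).Quotient))

/-- The generator σ_i of `TM n` (defined for 1 ≤ i ≤ n−1; junk value 1 otherwise). -/
def TM.s (n i : ℕ) : TM n := (conGen (TMRel n)).mk' (wS n i)

/-- The generator σ_i⁻¹ of `TM n` (defined for 1 ≤ i ≤ n−1; junk value 1 otherwise). -/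
def TM.sInv (n i : ℕ) : TM n := (conGen (TMRel n)).mk' (wSI n i)

/-- The generator η_i of `TM n` (defined for 1 ≤ i ≤ n−1; junk value 1 otherwise). -/
def TM.e (n i : ℕ) : TM n := (conGen (TMRel n)).mk' (wE n i)

/-- The generalized tie η_{i,j} = σ_i σ_{i+1} ⋯ σ_{j−2} η_{j−1} σ_{j−2}⁻¹ ⋯ σ_{i+1}⁻¹ σ_i⁻¹,
for 1 ≤ i < j ≤ n (in particular η_{i,i+1} = η_i). -/
def TM.genTie (n i j : ℕ) : TM n :=
  (((List.range' i (j - 1 - i)).map (TM.s n)).prod) * TM.e n (j - 1) *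
    (((List.range' i (j - 1 - i)).reverse.map (TM.sInv n)).prod)

/-!
Conjugation by a unit preserves the relations `a b = a c = b c`, so the idea is to move the three
ties by conjugations until they become `η_i, η_{i+1}, σ_i η_{i+1} σ_i⁻¹`, where the relations are
`η_i η_{i+1} σ_i = η_{i+1} σ_i η_{i+1} = σ_i η_i η_{i+1}`. By definition `η_{i,j}` is the conjugate
of `η_{i+1,j}` by `σ_i`; the relations `η_i σ_j σ_i^{±1} = σ_j σ_i^{±1} η_j` give
`σ_i η_{i+1} σ_i⁻¹ = σ_{i+1} η_i σ_{i+1}⁻¹`, whence `η_{i,j+1}` is also the conjugate of `η_{i,j}`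
by `σ_j`. Since `σ_l` commutes with `η_{i,k}` for `l ∉ [i - 1, k]`, conjugating by `σ_{m-1}` lowers
`m` and conjugating by `σ_i` raises `i`, each time leaving the third tie fixed.
-/

@[elab_as_elim]
theorem Nat.lt_induction_left {P : (i j : ℕ) → i < j → Prop}
    (base : ∀ i, P i (i + 1) (Nat.lt_add_one i))
    (step : ∀ i j (hij : i + 1 < j), P (i + 1) j hij → P i j (by omega))
    (i j : ℕ) (hij : i < j) : P i j hij := by
  obtain ⟨d, rfl⟩ := Nat.exists_eq_add_of_lt hij
  induction d generalizing i with
  | zero => exact base i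
  | succ d ih =>
    refine step i _ (by omega) ?_
    convert ih (i := i + 1) (by omega) using 2
    omega

section Conjugation

variable {M : Type*} [Monoid M]

def IsTransitiveTriple (a b c : M) : Prop := a * b = a * c ∧ a * c = b * c

theorem IsTransitiveTriple.conj {a b c : M} (h : IsTransitiveTriple a b c) (u : Mˣ) :
    IsTransitiveTriple (u * a * ↑u⁻¹) (u * b * ↑u⁻¹) (u * c * ↑u⁻¹) := by
  have conj_mul (x y : M) : u * x * ↑u⁻¹ * (u * y * ↑u⁻¹) = u * (x * y) * ↑u⁻¹ := by
    simp [mul_assoc]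
  simp only [IsTransitiveTriple, conj_mul, h.1, h.2, and_self]

theorem Units.conj_eq_of_commute {u : Mˣ} {a : M} (h : Commute (u : M) a) :
    u * a * ↑u⁻¹ = a :=
  (Units.mul_inv_eq_iff_eq_mul u).2 h.eq

theorem Units.conj_conj_of_commute {u v : Mˣ} (h : Commute (u : M) v) (x : M) :
    u * (v * x * ↑v⁻¹) * ↑u⁻¹ = v * (u * x * ↑u⁻¹) * ↑v⁻¹ := by
  have huv : u * v = v * u := Units.ext h.eq
  calc u * (v * x * ↑v⁻¹) * ↑u⁻¹ = ↑(u * v) * x * ↑(u * v)⁻¹ := by simp [mul_assoc]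
    _ = ↑(v * u) * x * ↑(v * u)⁻¹ := by rw [huv]
    _ = v * (u * x * ↑u⁻¹) * ↑v⁻¹ := by simp [mul_assoc]

theorem Units.inv_conj_eq_conj_of_mul_eq {g h : Mˣ} {x y : M} (H : x * g * h = g * h * y) :
    ↑g⁻¹ * x * g = h * y * ↑h⁻¹ := by
  calc ↑g⁻¹ * x * g = ↑g⁻¹ * (x * g * h) * ↑h⁻¹ := by simp [mul_assoc]
    _ = h * y * ↑h⁻¹ := by rw [H]; simp [mul_assoc]

end Conjugation

namespace TM

variable {n : ℕ}

theorem mk'_eq_of_rel {a b : FreeMonoid (TMGen n)} (h : TMRel n a b) :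
    (conGen (TMRel n)).mk' a = (conGen (TMRel n)).mk' b :=
  (Con.eq _).2 (ConGen.Rel.of a b h)

-- Out of range the generators are `1`, so commutation relations hold for all indices.
section OutOfRange

variable {i : ℕ} (h : ¬(1 ≤ i ∧ i ≤ n - 1))
include h

theorem s_eq_one_of_out_of_range : s n i = 1 := by
  simp only [s, wS, h, dite_false, map_one]
  rfl

theorem sInv_eq_one_of_out_of_range : sInv n i = 1 := by
  simp only [sInv, wSI, h, dite_false, map_one]
  rfl

theorem e_eq_one_of_out_of_range : e n i = 1 := by
  simp only [e, wE, h, dite_false, map_one]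
  rfl

end OutOfRange

theorem s_mul_sInv (i : ℕ) : s n i * sInv n i = 1 := by
  by_cases h : 1 ≤ i ∧ i ≤ n - 1
  · exact mk'_eq_of_rel (TMRel.inv_right i h)
  · simp [s_eq_one_of_out_of_range h, sInv_eq_one_of_out_of_range h]

theorem sInv_mul_s (i : ℕ) : sInv n i * s n i = 1 := by
  by_cases h : 1 ≤ i ∧ i ≤ n - 1
  · exact mk'_eq_of_rel (TMRel.inv_left i h)
  · simp [s_eq_one_of_out_of_range h, sInv_eq_one_of_out_of_range h]

def sUnit (n i : ℕ) : (TM n)ˣ := ⟨s n i, sInv n i, s_mul_sInv i, sInv_mul_s i⟩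

theorem commute_s_s {i j : ℕ} (hij : i + 2 ≤ j ∨ j + 2 ≤ i) : Commute (s n i) (s n j) := by
  by_cases hi : 1 ≤ i ∧ i ≤ n - 1
  · by_cases hj : 1 ≤ j ∧ j ≤ n - 1
    · exact mk'_eq_of_rel (TMRel.sig_comm i j hi hj hij)
    · simp [s_eq_one_of_out_of_range hj]
  · simp [s_eq_one_of_out_of_range hi]

theorem commute_e_s {i j : ℕ} (hij : i + 2 ≤ j ∨ j + 2 ≤ i) : Commute (e n i) (s n j) := by
  by_cases hi : 1 ≤ i ∧ i ≤ n - 1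
  · by_cases hj : 1 ≤ j ∧ j ≤ n - 1
    · exact mk'_eq_of_rel (TMRel.eta_sig_far i j hi hj hij)
    · simp [s_eq_one_of_out_of_range hj]
  · simp [e_eq_one_of_out_of_range hi]

theorem commute_e_s_self (i : ℕ) : Commute (e n i) (s n i) := by
  by_cases hi : 1 ≤ i ∧ i ≤ n - 1
  · exact mk'_eq_of_rel (TMRel.eta_sig i hi)
  · simp [s_eq_one_of_out_of_range hi]

section Adjacent

variable {i j : ℕ} (hi : 1 ≤ i ∧ i ≤ n - 1) (hj : 1 ≤ j ∧ j ≤ n - 1)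
  (hij : j = i + 1 ∨ i = j + 1)
include hi hj hij

theorem e_mul_s_mul_s : e n i * s n j * s n i = s n j * s n i * e n j :=
  mk'_eq_of_rel (TMRel.eta_slide_pos i j hi hj hij)

theorem e_mul_s_mul_sInv : e n i * s n j * sInv n i = s n j * sInv n i * e n j :=
  mk'_eq_of_rel (TMRel.eta_slide_neg i j hi hj hij)

theorem e_mul_e_mul_s : e n i * e n j * s n i = e n j * s n i * e n j :=
  mk'_eq_of_rel (TMRel.eta_eta_sig₁ i j hi hj hij)

theorem e_mul_s_mul_e : e n j * s n i * e n j = s n i * e n i * e n j :=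
  mk'_eq_of_rel (TMRel.eta_eta_sig₂ i j hi hj hij)

end Adjacent

theorem genTie_succ (i : ℕ) : genTie n i (i + 1) = e n i := by
  simp [genTie]

theorem genTie_eq_conj {i j : ℕ} (hij : i + 1 < j) :
    genTie n i j = s n i * genTie n (i + 1) j * sInv n i := by
  obtain ⟨d, rfl⟩ := Nat.exists_eq_add_of_lt hij
  simp only [genTie, show i + 1 + d + 1 - 1 - i = d + 1 by omega,
    show i + 1 + d + 1 - 1 - (i + 1) = d by omega, List.range'_succ, List.map_cons,
    List.prod_cons, List.reverse_cons, List.map_append, List.prod_append, List.map_nil,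
    List.prod_nil, mul_one, mul_assoc]

theorem commute_s_genTie {l i k : ℕ} (hik : i < k) (hl : k < l ∨ l + 2 ≤ i) :
    Commute (s n l) (genTie n i k) := by
  induction i, k, hik using Nat.lt_induction_left with
  | base i =>
    rw [genTie_succ]
    exact (commute_e_s (by omega)).symm
  | step i k hik ih =>
    have hli : Commute (s n l) (s n i) := commute_s_s (by omega)
    rw [genTie_eq_conj hik]
    exact (hli.mul_right (ih (by omega))).mul_right (hli.units_inv_right (u := sUnit n i))

theorem s_mul_e_succ_mul_sInv {i : ℕ} (hi : 1 ≤ i) (hin : i + 2 ≤ n) :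
    s n i * e n (i + 1) * sInv n i = s n (i + 1) * e n i * sInv n (i + 1) := by
  have hi : 1 ≤ i ∧ i ≤ n - 1 := ⟨hi, by omega⟩
  have hi' : 1 ≤ i + 1 ∧ i + 1 ≤ n - 1 := ⟨by omega, by omega⟩
  set u := sUnit n i
  set v := sUnit n (i + 1)
  calc (u : TM n) * e n (i + 1) * ↑u⁻¹ = ↑v⁻¹ * e n i * v :=
        (Units.inv_conj_eq_conj_of_mul_eq (e_mul_s_mul_s hi hi' (.inl rfl))).symm
    _ = ↑u⁻¹ * e n (i + 1) * ↑u⁻¹⁻¹ :=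
        Units.inv_conj_eq_conj_of_mul_eq (g := v) (h := u⁻¹) (e_mul_s_mul_sInv hi hi' (.inl rfl))
    _ = v * e n i * ↑v⁻¹ := by
        rw [inv_inv]
        exact Units.inv_conj_eq_conj_of_mul_eq (g := u) (h := v) (e_mul_s_mul_s hi' hi (.inr rfl))

theorem genTie_succ_right {i j : ℕ} (hi : 1 ≤ i) (hij : i < j) (hj : j < n) :
    genTie n i (j + 1) = s n j * genTie n i j * sInv n j := by
  induction i, j, hij using Nat.lt_induction_left with
  | base i =>
    rw [genTie_eq_conj (by omega), genTie_succ, genTie_succ]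
    exact s_mul_e_succ_mul_sInv hi (by omega)
  | step i j hij ih =>
    rw [genTie_eq_conj (by omega), ih (by omega) hj, genTie_eq_conj hij]
    exact Units.conj_conj_of_commute (u := sUnit n i) (v := sUnit n j) (commute_s_s (by omega)) _

theorem isTransitiveTriple_e_e_succ {i : ℕ} (hi : 1 ≤ i) (hin : i + 2 ≤ n) :
    IsTransitiveTriple (e n i) (e n (i + 1)) (s n i * e n (i + 1) * sInv n i) := by
  have hi : 1 ≤ i ∧ i ≤ n - 1 := ⟨hi, by omega⟩
  have hi' : 1 ≤ i + 1 ∧ i + 1 ≤ n - 1 := ⟨by omega, by omega⟩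
  have key : e n i * (s n i * e n (i + 1) * sInv n i) =
      s n i * e n i * e n (i + 1) * sInv n i := by
    simp only [← mul_assoc, (commute_e_s_self i).eq]
  constructor
  · rw [key, ← e_mul_s_mul_e hi hi' (.inl rfl), ← e_mul_e_mul_s hi hi' (.inl rfl),
      mul_assoc _ (s n i), s_mul_sInv, mul_one]
  · rw [key, ← e_mul_s_mul_e hi hi' (.inl rfl)]
    simp only [mul_assoc]

theorem isTransitiveTriple_genTie_succ {i k : ℕ} (hi : 1 ≤ i) (hik : i < k) (hk : k < n) :
    IsTransitiveTriple (genTie n i k) (genTie n k (k + 1)) (genTie n i (k + 1)) := by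
  induction i, k, hik using Nat.lt_induction_left with
  | base i =>
    rw [genTie_eq_conj (i := i) (j := i + 1 + 1) (by omega), genTie_succ, genTie_succ]
    exact isTransitiveTriple_e_e_succ hi (by omega)
  | step i k hik ih =>
    rw [genTie_eq_conj hik, genTie_eq_conj (i := i) (j := k + 1) (by omega),
      ← Units.conj_eq_of_commute (u := sUnit n i) (commute_s_genTie (by omega) (.inr hik))]
    exact (ih (by omega) hk).conj (sUnit n i)

theorem isTransitiveTriple_genTie {i k m : ℕ} (hi : 1 ≤ i) (hik : i < k) (hkm : k < m)
    (hm : m ≤ n) : IsTransitiveTriple (genTie n i k) (genTie n k m) (genTie n i m) := by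
  induction m, hkm using Nat.le_induction with
  | base => exact isTransitiveTriple_genTie_succ hi hik hm
  | succ m hkm ih =>
    rw [genTie_succ_right (by omega) hkm hm, genTie_succ_right hi (by omega) hm,
      ← Units.conj_eq_of_commute (u := sUnit n m) (commute_s_genTie hik (.inl hkm))]
    exact (ih (by omega)).conj (sUnit n m)

end TM

theorem tm_genTie_transitivity_general (n : ℕ) (i k m : ℕ)
    (hi : 1 ≤ i) (hik : i < k) (hkm : k < m) (hm : m ≤ n) :
    TM.genTie n i k * TM.genTie n k m = TM.genTie n i k * TM.genTie n i m ∧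
    TM.genTie n i k * TM.genTie n i m = TM.genTie n k m * TM.genTie n i m :=
  TM.isTransitiveTriple_genTie hi hik hkm hm

/-- **Transitivity relations for generalized ties**: for every n ≥ 2 and all indices
1 ≤ i < k < m ≤ n, η_{i,k} η_{k,m} = η_{i,k} η_{i,m} = η_{k,m} η_{i,m} in `TM n`. -/
theorem tm_genTie_transitivity (n : ℕ) (hn : 2 ≤ n) (i k m : ℕ)
    (hi : 1 ≤ i) (hik : i < k) (hkm : k < m) (hm : m ≤ n) :
    TM.genTie n i k * TM.genTie n k m = TM.genTie n i k * TM.genTie n i m ∧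
    TM.genTie n i k * TM.genTie n i m = TM.genTie n k m * TM.genTie n i m :=
  tm_genTie_transitivity_general n i k m hi hik hkm hm
end
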